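/- arXiv:2108.06756 — 9 statements merged into one kernel-verified Lean document; each statement's English description precedes it below -/
import Mathlib

section
/- Let p k : ℕ with k + 2 ≤ p. For every real number x, rounding the round-to-odd result of x at precision p back to precision k with round-to-nearest-ties-to-even gives the same value as rounding x directly: RN k (roundOdd p x) = RN k x. (Double rounding through the round-to-odd mode with at least two extra bits of precision is innocuous for the round-to-nearest-ties-to-even mode.) -/
/-!
If `x` is a multiple of `2^(-p)`, round-to-odd leaves it alone. Otherwise `x` and `roundOdd p x`
lie in the same open cell of the grid `2^(-(p-1)) ℤ`. As `p - 1 ≥ k + 1`, this cell lies inside an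
open cell of the coarser grid `2^(-(k+1)) ℤ`, which contains neither a multiple of `2^(-k)` nor a
midpoint between two of them; `RN k` is constant on such a cell.
-/

open Classical in
/-- Round-to-odd at precision `p`: if `x` is an integer multiple of `2^(-p)` it is
unchanged; otherwise it rounds to the unique multiple of `2^(-p)` with odd numerator
strictly between the two consecutive multiples of `2^(-p)` enclosing `x`. -/
noncomputable def roundOdd (p : ℕ) (x : ℝ) : ℝ :=
  if ∃ m : ℤ, (2 : ℝ) ^ p * x = (m : ℝ) then x
  else ((2 * ⌊(2 : ℝ) ^ (p - 1) * x⌋ + 1 : ℤ) : ℝ) / 2 ^ p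

open Classical in
/-- Round-to-nearest-ties-to-even at precision `k`. -/
noncomputable def RN (k : ℕ) (x : ℝ) : ℝ :=
  ((if Int.fract ((2 : ℝ) ^ k * x) = 1 / 2 then ⌊(2 : ℝ) ^ k * x⌋ + ⌊(2 : ℝ) ^ k * x⌋ % 2
    else round ((2 : ℝ) ^ k * x) : ℤ) : ℝ) / 2 ^ k

/-- Round-to-nearest-ties-to-away at precision `k`. -/
noncomputable def RA (k : ℕ) (x : ℝ) : ℝ :=
  if 0 ≤ x then ((⌊(2 : ℝ) ^ k * x + 1 / 2⌋ : ℤ) : ℝ) / 2 ^ k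
  else ((⌈(2 : ℝ) ^ k * x - 1 / 2⌉ : ℤ) : ℝ) / 2 ^ k

/-- Round-towards-zero at precision `k`. -/
noncomputable def RZ (k : ℕ) (x : ℝ) : ℝ :=
  if 0 ≤ x then ((⌊(2 : ℝ) ^ k * x⌋ : ℤ) : ℝ) / 2 ^ k
  else ((⌈(2 : ℝ) ^ k * x⌉ : ℤ) : ℝ) / 2 ^ k

/-- Round-towards-positive-infinity at precision `k`. -/
noncomputable def RU (k : ℕ) (x : ℝ) : ℝ := ((⌈(2 : ℝ) ^ k * x⌉ : ℤ) : ℝ) / 2 ^ k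

/-- Round-towards-negative-infinity at precision `k`. -/
noncomputable def RD (k : ℕ) (x : ℝ) : ℝ := ((⌊(2 : ℝ) ^ k * x⌋ : ℤ) : ℝ) / 2 ^ k

open Set

lemma mem_Ioo_floor_of_ne_intCast {s : ℝ} (h : ∀ n : ℤ, s ≠ n) :
    s ∈ Ioo (⌊s⌋ : ℝ) (⌊s⌋ + 1) :=
  ⟨lt_of_le_of_ne (Int.floor_le s) (h _).symm, Int.lt_floor_add_one s⟩

lemma mem_Ioo_ediv_of_mul_mem_Ioo {q a : ℤ} (hq : 0 < q) {s : ℝ}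
    (h : (q : ℝ) * s ∈ Ioo (a : ℝ) (a + 1)) :
    s ∈ Ioo ((a / q : ℤ) : ℝ) ((a / q : ℤ) + 1) := by
  have hq' : (0 : ℝ) < q := by exact_mod_cast hq
  have hlow : ((q * (a / q) : ℤ) : ℝ) ≤ a := by exact_mod_cast Int.mul_ediv_self_le hq.ne'
  have hhigh : ((a + 1 : ℤ) : ℝ) ≤ (((a / q + 1) * q : ℤ) : ℝ) := by
    exact_mod_cast Int.add_one_le_of_lt (Int.lt_ediv_add_one_mul_self a hq)
  push_cast at hlow hhigh
  obtain ⟨h₁, h₂⟩ := h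
  constructor <;> nlinarith

lemma fract_ne_half_of_two_mul_mem_Ioo {j : ℤ} {s : ℝ} (h : 2 * s ∈ Ioo (j : ℝ) (j + 1)) :
    Int.fract s ≠ 1 / 2 := by
  intro hf
  have hs : 2 * s = ((2 * ⌊s⌋ + 1 : ℤ) : ℝ) := by
    push_cast
    linarith [Int.floor_add_fract s]
  rw [hs] at h
  obtain ⟨h₁, h₂⟩ := h
  have h₁' : j < 2 * ⌊s⌋ + 1 := by exact_mod_cast h₁
  have h₂' : 2 * ⌊s⌋ + 1 < j + 1 := by exact_mod_cast h₂
  omega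

lemma round_eq_of_two_mul_mem_Ioo {j : ℤ} {s : ℝ} (h : 2 * s ∈ Ioo (j : ℝ) (j + 1)) :
    round s = (j + 1) / 2 := by
  have hlow : ((2 * ((j + 1) / 2) : ℤ) : ℝ) ≤ ((j + 1 : ℤ) : ℝ) := by
    exact_mod_cast (by omega : 2 * ((j + 1) / 2) ≤ j + 1)
  have hhigh : ((j + 1 : ℤ) : ℝ) ≤ ((2 * ((j + 1) / 2) + 1 : ℤ) : ℝ) := by
    exact_mod_cast (by omega : j + 1 ≤ 2 * ((j + 1) / 2) + 1)
  push_cast at hlow hhigh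
  obtain ⟨h₁, h₂⟩ := h
  rw [round_eq, Int.floor_eq_iff]
  constructor <;> linarith

lemma RN_eq_of_two_pow_succ_mul_mem_Ioo {k : ℕ} {j : ℤ} {s : ℝ}
    (h : (2 : ℝ) ^ (k + 1) * s ∈ Ioo (j : ℝ) (j + 1)) :
    RN k s = ((j + 1) / 2 : ℤ) / 2 ^ k := by
  rw [pow_succ, mul_comm _ (2 : ℝ), mul_assoc] at h
  rw [RN, if_neg (fract_ne_half_of_two_mul_mem_Ioo h), round_eq_of_two_mul_mem_Ioo h]

lemma two_pow_pred_mul_roundOdd_of_not_exists {p : ℕ} (hp : 1 ≤ p) {x : ℝ}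
    (h : ¬∃ m : ℤ, (2 : ℝ) ^ p * x = m) :
    (2 : ℝ) ^ (p - 1) * roundOdd p x = ⌊(2 : ℝ) ^ (p - 1) * x⌋ + 1 / 2 := by
  obtain ⟨q, rfl⟩ := Nat.exists_eq_add_of_le' hp
  rw [roundOdd, if_neg h, Nat.add_sub_cancel, pow_succ]
  push_cast
  field_simp

theorem roundOdd_RN_double_rounding (p k : ℕ) (hkp : k + 2 ≤ p) (x : ℝ) :
    RN k (roundOdd p x) = RN k x := by
  by_cases h : ∃ m : ℤ, (2 : ℝ) ^ p * x = m
  · rw [roundOdd, if_pos h]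
  set m := ⌊(2 : ℝ) ^ (p - 1) * x⌋
  have hpow : (2 : ℝ) ^ p = 2 * 2 ^ (p - 1) := by
    rw [← pow_succ']
    congr 1
    omega
  have hx : (2 : ℝ) ^ (p - 1) * x ∈ Ioo (m : ℝ) (m + 1) :=
    mem_Ioo_floor_of_ne_intCast fun n hn =>
      h ⟨2 * n, by rw [hpow, mul_assoc, hn]; push_cast; ring⟩
  have hy : (2 : ℝ) ^ (p - 1) * roundOdd p x ∈ Ioo (m : ℝ) (m + 1) := by
    rw [two_pow_pred_mul_roundOdd_of_not_exists (by omega) h]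
    constructor <;> linarith
  have hsplit : ∀ t : ℝ,
      (2 : ℝ) ^ (p - 1) * t = (((2 : ℤ) ^ (p - k - 2) : ℤ) : ℝ) * (2 ^ (k + 1) * t) := by
    intro t
    rw [← mul_assoc, Int.cast_pow, Int.cast_ofNat, ← pow_add]
    congr 2
    omega
  rw [hsplit] at hx hy
  rw [RN_eq_of_two_pow_succ_mul_mem_Ioo (mem_Ioo_ediv_of_mul_mem_Ioo (by positivity) hy),
    RN_eq_of_two_pow_succ_mul_mem_Ioo (mem_Ioo_ediv_of_mul_mem_Ioo (by positivity) hx)]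
end

section
/- Let p k : ℕ with k + 2 ≤ p. For every real number x, rounding the round-to-odd result of x at precision p back to precision k with round-to-nearest-ties-to-away gives the same value as rounding x directly: RA k (roundOdd p x) = RA k x. -/
/-!
The breakpoints of `RA k` (the midpoints `(n + 1/2) / 2^k`, and `0` for its sign test) are all
multiples of `2^-(k+1)`, so `RA k x` is determined by `⌊2^j x⌋` and `⌈2^j x⌉` for any `j ≥ k + 1`.
Round-to-odd at precision `p` replaces an inexact `x` by the midpoint of the open cell
of width `2^-(p-1)` containing it, so it preserves both at `j = p - 1 ≥ k + 1`.
-/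

theorem floor_two_pow_mul_add_half (k e : ℕ) (a : ℝ) :
    ⌊(2 : ℝ) ^ k * a + 1 / 2⌋ = (⌊(2 : ℝ) ^ (k + 1 + e) * a⌋ + 2 ^ e) / (2 ^ (e + 1) : ℕ) := by
  have h : (2 : ℝ) ^ k * a + 1 / 2
      = ((2 : ℝ) ^ (k + 1 + e) * a + ((2 ^ e : ℤ) : ℝ)) / ((2 ^ (e + 1) : ℕ) : ℝ) := by
    push_cast; field_simp; ring
  rw [h, Int.floor_div_natCast, Int.floor_add_intCast]

theorem ceil_two_pow_mul_sub_half (k e : ℕ) (a : ℝ) :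
    ⌈(2 : ℝ) ^ k * a - 1 / 2⌉ = -((2 ^ e - ⌈(2 : ℝ) ^ (k + 1 + e) * a⌉) / (2 ^ (e + 1) : ℕ)) := by
  have h : (2 : ℝ) ^ k * a - 1 / 2 = -((2 : ℝ) ^ k * -a + 1 / 2) := by ring
  rw [h, Int.ceil_neg, floor_two_pow_mul_add_half k e, mul_neg, Int.floor_neg, neg_add_eq_sub]

theorem RA_eq_ite_floor_ceil (k e : ℕ) (x : ℝ) :
    RA k x = ((if 0 ≤ ⌊(2 : ℝ) ^ (k + 1 + e) * x⌋
      then (⌊(2 : ℝ) ^ (k + 1 + e) * x⌋ + 2 ^ e) / (2 ^ (e + 1) : ℕ)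
      else -((2 ^ e - ⌈(2 : ℝ) ^ (k + 1 + e) * x⌉) / (2 ^ (e + 1) : ℕ)) : ℤ) : ℝ) / 2 ^ k := by
  have hsign : 0 ≤ ⌊(2 : ℝ) ^ (k + 1 + e) * x⌋ ↔ 0 ≤ x := by
    rw [Int.floor_nonneg]; exact mul_nonneg_iff_of_pos_left (by positivity)
  simp only [RA, hsign]
  split_ifs
  · rw [floor_two_pow_mul_add_half k e]
  · rw [ceil_two_pow_mul_sub_half k e]

theorem two_pow_mul_roundOdd_succ_of_not_int {p : ℕ} {x : ℝ}
    (h : ¬∃ m : ℤ, (2 : ℝ) ^ (p + 1) * x = m) :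
    (2 : ℝ) ^ p * roundOdd (p + 1) x = ⌊(2 : ℝ) ^ p * x⌋ + 1 / 2 := by
  rw [roundOdd, if_neg h, Nat.add_sub_cancel, pow_succ]
  push_cast
  field_simp

theorem floor_two_pow_mul_roundOdd_succ (p : ℕ) (x : ℝ) :
    ⌊(2 : ℝ) ^ p * roundOdd (p + 1) x⌋ = ⌊(2 : ℝ) ^ p * x⌋ := by
  by_cases h : ∃ m : ℤ, (2 : ℝ) ^ (p + 1) * x = m
  · rw [roundOdd, if_pos h]
  · rw [two_pow_mul_roundOdd_succ_of_not_int h, Int.floor_eq_iff]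
    constructor <;> linarith

theorem ceil_two_pow_mul_roundOdd_succ (p : ℕ) (x : ℝ) :
    ⌈(2 : ℝ) ^ p * roundOdd (p + 1) x⌉ = ⌈(2 : ℝ) ^ p * x⌉ := by
  by_cases h : ∃ m : ℤ, (2 : ℝ) ^ (p + 1) * x = m
  · rw [roundOdd, if_pos h]
  · have hx : (2 : ℝ) ^ p * x ∉ Set.range Int.cast := by
      rintro ⟨m, hm⟩
      exact h ⟨2 * m, by rw [pow_succ', mul_assoc, ← hm]; push_cast; ring⟩
    rw [two_pow_mul_roundOdd_succ_of_not_int h, (Int.ceil_eq_floor_add_one_iff_notMem _).mpr hx,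
      Int.ceil_eq_iff]
    push_cast
    constructor <;> linarith

theorem roundOdd_RA_double_rounding (p k : ℕ) (hkp : k + 2 ≤ p) (x : ℝ) :
    RA k (roundOdd p x) = RA k x := by
  obtain ⟨e, rfl⟩ : ∃ e, p = k + 1 + e + 1 := ⟨p - k - 2, by omega⟩
  rw [RA_eq_ite_floor_ceil k e, RA_eq_ite_floor_ceil k e, floor_two_pow_mul_roundOdd_succ,
    ceil_two_pow_mul_roundOdd_succ]
end

section
/- Let p k : ℕ with k + 2 ≤ p. For every real number x, rounding the round-to-odd result of x at precision p back to precision k with round-towards-zero gives the same value as rounding x directly: RZ k (roundOdd p x) = RZ k x. -/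
/-!
If `2^p x` is not an integer, `x` and `roundOdd p x` (the midpoint of the cell) lie in the same
open cell of the grid `2^(-(p-1)) ℤ`, so they have the same floor, ceiling and sign at precision
`p - 1`, hence at every coarser precision `k ≤ p - 1`; and `RZ k` depends only on these.
-/

lemma floor_two_pow_mul_eq_of_le {j k : ℕ} (hkj : k ≤ j) {x y : ℝ}
    (h : ⌊(2 : ℝ) ^ j * x⌋ = ⌊(2 : ℝ) ^ j * y⌋) : ⌊(2 : ℝ) ^ k * x⌋ = ⌊(2 : ℝ) ^ k * y⌋ := by
  have hscale : ∀ z : ℝ, ⌊(2 : ℝ) ^ k * z⌋ = ⌊(2 : ℝ) ^ j * z⌋ / (2 ^ (j - k) : ℕ) := by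
    intro z
    rw [← Int.floor_div_natCast, ← pow_sub_mul_pow 2 hkj]
    push_cast
    field_simp
  rw [hscale, hscale, h]

lemma ceil_two_pow_mul_eq_of_le {j k : ℕ} (hkj : k ≤ j) {x y : ℝ}
    (h : ⌈(2 : ℝ) ^ j * x⌉ = ⌈(2 : ℝ) ^ j * y⌉) : ⌈(2 : ℝ) ^ k * x⌉ = ⌈(2 : ℝ) ^ k * y⌉ := by
  have hneg := floor_two_pow_mul_eq_of_le hkj (x := -x) (y := -y)
  simp only [mul_neg, Int.floor_neg, neg_inj] at hneg
  exact hneg h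

lemma RZ_eq_of_floor_eq_of_ceil_eq {j k : ℕ} (hkj : k ≤ j) {x y : ℝ}
    (hf : ⌊(2 : ℝ) ^ j * x⌋ = ⌊(2 : ℝ) ^ j * y⌋) (hc : ⌈(2 : ℝ) ^ j * x⌉ = ⌈(2 : ℝ) ^ j * y⌉) :
    RZ k x = RZ k y := by
  have hsign : 0 ≤ x ↔ 0 ≤ y := by
    rw [← mul_nonneg_iff_of_pos_left (by positivity : (0 : ℝ) < 2 ^ j), ← Int.floor_nonneg, hf,
      Int.floor_nonneg, mul_nonneg_iff_of_pos_left (by positivity)]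
  simp only [RZ, floor_two_pow_mul_eq_of_le hkj hf, ceil_two_pow_mul_eq_of_le hkj hc, hsign]

lemma two_pow_pred_mul_roundOdd {p : ℕ} (hp : 1 ≤ p) {x : ℝ}
    (hx : ¬∃ m : ℤ, (2 : ℝ) ^ p * x = m) :
    (2 : ℝ) ^ (p - 1) * roundOdd p x = ⌊(2 : ℝ) ^ (p - 1) * x⌋ + 1 / 2 := by
  rw [roundOdd, if_neg hx, ← pow_sub_mul_pow 2 hp]
  push_cast
  field_simp

lemma not_int_two_pow_pred_mul {p : ℕ} (hp : 1 ≤ p) {x : ℝ}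
    (hx : ¬∃ m : ℤ, (2 : ℝ) ^ p * x = m) : (2 : ℝ) ^ (p - 1) * x ∉ Set.range Int.cast := by
  rintro ⟨m, hm⟩
  refine hx ⟨2 * m, ?_⟩
  rw [← pow_sub_mul_pow 2 hp, pow_one, mul_comm _ (2 : ℝ), mul_assoc, ← hm]
  push_cast
  ring

lemma floor_two_pow_pred_mul_roundOdd {p : ℕ} (hp : 1 ≤ p) {x : ℝ}
    (hx : ¬∃ m : ℤ, (2 : ℝ) ^ p * x = m) :
    ⌊(2 : ℝ) ^ (p - 1) * roundOdd p x⌋ = ⌊(2 : ℝ) ^ (p - 1) * x⌋ := by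
  rw [two_pow_pred_mul_roundOdd hp hx, Int.floor_intCast_add]
  norm_num

lemma ceil_two_pow_pred_mul_roundOdd {p : ℕ} (hp : 1 ≤ p) {x : ℝ}
    (hx : ¬∃ m : ℤ, (2 : ℝ) ^ p * x = m) :
    ⌈(2 : ℝ) ^ (p - 1) * roundOdd p x⌉ = ⌈(2 : ℝ) ^ (p - 1) * x⌉ := by
  rw [(Int.ceil_eq_floor_add_one_iff_notMem _).2 (not_int_two_pow_pred_mul hp hx),
    two_pow_pred_mul_roundOdd hp hx, Int.ceil_intCast_add]
  norm_num

theorem roundOdd_RZ_double_rounding (p k : ℕ) (hkp : k + 2 ≤ p) (x : ℝ) :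
    RZ k (roundOdd p x) = RZ k x := by
  by_cases hx : ∃ m : ℤ, (2 : ℝ) ^ p * x = m
  · rw [roundOdd, if_pos hx]
  · have hp : 1 ≤ p := by omega
    exact RZ_eq_of_floor_eq_of_ceil_eq (by omega : k ≤ p - 1)
      (floor_two_pow_pred_mul_roundOdd hp hx) (ceil_two_pow_pred_mul_roundOdd hp hx)
end

section
/- Let p k : ℕ with k + 2 ≤ p. For every real number x, rounding the round-to-odd result of x at precision p back to precision k with round-towards-positive-infinity gives the same value as rounding x directly: RU k (roundOdd p x) = RU k x. -/
/-!
Off the grid `2^(-(p+1))ℤ`, round-to-odd at precision `p + 1` keeps `x` strictly between the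
same two consecutive multiples of `2^(-p)`, so rounding up at precision `p` cannot tell `x` and
`roundOdd (p + 1) x` apart. Rounding up to a coarser grid factors through rounding up to a finer
one, so the same holds at every precision `k ≤ p`.
-/

theorem Int.ceil_div_natCast_ceil {K : Type*} [Field K] [LinearOrder K] [IsOrderedRing K]
    [FloorRing K] (a : K) (n : ℕ) : ⌈(⌈a⌉ : K) / n⌉ = ⌈a / n⌉ := by
  rcases Nat.eq_zero_or_pos n with rfl | hn
  · simp
  refine le_antisymm (Int.ceil_le.mpr ?_) (Int.ceil_mono (by gcongr; exact Int.le_ceil a))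
  have hn' : (0 : K) < n := Nat.cast_pos.mpr hn
  have hceil : ⌈a⌉ ≤ ⌈a / n⌉ * n := Int.ceil_le.mpr <| by
    push_cast; exact (div_le_iff₀ hn').mp (Int.le_ceil _)
  rw [div_le_iff₀ hn']
  exact_mod_cast hceil

theorem RU_RU_of_le {k j : ℕ} (hkj : k ≤ j) (x : ℝ) : RU k (RU j x) = RU k x := by
  obtain ⟨d, rfl⟩ := Nat.exists_eq_add_of_le hkj
  have hscale (y : ℝ) : (2 : ℝ) ^ k * y = 2 ^ (k + d) * y / ((2 ^ d : ℕ) : ℝ) := by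
    push_cast; rw [pow_add]; field_simp
  unfold RU
  rw [hscale, hscale x, mul_div_cancel₀ _ (by positivity), Int.ceil_div_natCast_ceil]

theorem RU_roundOdd_succ (p : ℕ) (x : ℝ) : RU p (roundOdd (p + 1) x) = RU p x := by
  unfold roundOdd
  split_ifs with hx
  · rfl
  have hfrac : (2 : ℝ) ^ p * x ∉ Set.range Int.cast := by
    rintro ⟨m, hm⟩
    exact hx ⟨2 * m, by push_cast; rw [pow_succ, mul_comm _ (2 : ℝ), mul_assoc, ← hm]⟩
  unfold RU
  rw [(Int.ceil_eq_floor_add_one_iff_notMem _).mpr hfrac, Nat.add_sub_cancel]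
  set n := ⌊(2 : ℝ) ^ p * x⌋
  have hmid : (2 : ℝ) ^ p * (((2 * n + 1 : ℤ) : ℝ) / 2 ^ (p + 1)) = n + 1 / 2 := by
    push_cast; rw [pow_succ]; field_simp
  have hceil : ⌈(n : ℝ) + 1 / 2⌉ = n + 1 := by
    rw [Int.ceil_eq_iff]; push_cast; constructor <;> linarith
  rw [hmid, hceil]

theorem roundOdd_RU_double_rounding (p k : ℕ) (hkp : k + 2 ≤ p) (x : ℝ) :
    RU k (roundOdd p x) = RU k x := by
  obtain ⟨q, rfl⟩ : ∃ q, p = q + 1 := ⟨p - 1, by omega⟩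
  rw [← RU_RU_of_le (by omega : k ≤ q), RU_roundOdd_succ, RU_RU_of_le (by omega)]
end

section
/- Let p k : ℕ with k + 2 ≤ p. For every real number x, rounding the round-to-odd result of x at precision p back to precision k with round-towards-negative-infinity gives the same value as rounding x directly: RD k (roundOdd p x) = RD k x. -/
/-!
Round-to-odd at precision `p + 1` either leaves `x` unchanged or returns the midpoint of the
cell of the grid `2^(-p) ℤ` that contains `x`, so `RD p` cannot tell `x` and its rounding apart.
Since `RD k` factors through `RD p` for `k ≤ p`, the same holds at every coarser precision.
-/

theorem RD_RD_of_le {j k : ℕ} (hkj : k ≤ j) (x : ℝ) : RD k (RD j x) = RD k x := by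
  obtain ⟨d, rfl⟩ := Nat.exists_eq_add_of_le hkj
  have hscale : ((2 ^ d : ℕ) : ℝ) * 2 ^ k = 2 ^ (k + d) := by push_cast; ring
  have hlhs : (2 : ℝ) ^ k * (⌊(2 : ℝ) ^ (k + d) * x⌋ / 2 ^ (k + d))
      = ⌊(2 : ℝ) ^ (k + d) * x⌋ / ((2 ^ d : ℕ) : ℝ) := by
    rw [← hscale]; field_simp
  have hrhs : (2 : ℝ) ^ k * x = (2 : ℝ) ^ (k + d) * x / ((2 ^ d : ℕ) : ℝ) := by
    rw [← hscale]; field_simp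
  unfold RD
  rw [hlhs, hrhs, Int.floor_div_natCast, Int.floor_div_natCast, Int.floor_intCast]

theorem RD_roundOdd_succ (p : ℕ) (x : ℝ) : RD p (roundOdd (p + 1) x) = RD p x := by
  unfold roundOdd
  split_ifs
  · rfl
  rw [Nat.add_sub_cancel]
  set m := ⌊(2 : ℝ) ^ p * x⌋
  have hmid : (2 : ℝ) ^ p * (((2 * m + 1 : ℤ) : ℝ) / 2 ^ (p + 1)) = m + 1 / 2 := by
    push_cast; field_simp; ring
  have hfloor : ⌊(m : ℝ) + 1 / 2⌋ = m := by
    rw [Int.floor_intCast_add]; norm_num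
  unfold RD
  rw [hmid, hfloor]

theorem roundOdd_RD_double_rounding (p k : ℕ) (hkp : k + 2 ≤ p) (x : ℝ) :
    RD k (roundOdd p x) = RD k x := by
  obtain ⟨j, rfl⟩ : ∃ j, p = j + 1 := ⟨p - 1, by omega⟩
  have hkj : k ≤ j := by omega
  rw [← RD_RD_of_le hkj, RD_roundOdd_succ, RD_RD_of_le hkj]
end

section
/- Let p k : ℕ with k + 2 ≤ p. For all real numbers x and v, if roundOdd p v = roundOdd p x (i.e. v lies in the odd interval of the round-to-odd result of x at precision p), then v and x round identically to precision k under all five IEEE-754 rounding modes: RN k v = RN k x, RA k v = RA k x, RZ k v = RZ k x, RU k v = RU k x, and RD k v = RD k x. -/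
/-!
Round-to-odd at precision `p` never crosses a multiple of `2^(1-p)`: it either fixes `x` or
moves it to the midpoint of the open interval between the consecutive multiples of `2^(1-p)`
enclosing `x`. Hence `v` and `x` have the same floor and ceiling at scale `2^(p-1)`, and so at
every coarser scale `2^(k+1)`. Each of the five roundings at precision `k` depends only on the
floor and ceiling at scale `2^(k+1)`: the directed ones by halving, the nearest ones because
their breakpoints are the midpoints between multiples of `2^(-k)`, i.e. multiples of `2^(-(k+1))`.
-/

def FloorCeilEq {α : Type*} [Ring α] [LinearOrder α] [FloorRing α] (a b : α) : Prop :=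
  ⌊a⌋ = ⌊b⌋ ∧ ⌈a⌉ = ⌈b⌉

namespace FloorCeilEq

section Ring

variable {α : Type*} [Ring α] [LinearOrder α] [FloorRing α] {a b c : α}

theorem refl (a : α) : FloorCeilEq a a := ⟨rfl, rfl⟩

theorem symm (h : FloorCeilEq a b) : FloorCeilEq b a := ⟨h.1.symm, h.2.symm⟩

theorem trans (hab : FloorCeilEq a b) (hbc : FloorCeilEq b c) : FloorCeilEq a c :=
  ⟨hab.1.trans hbc.1, hab.2.trans hbc.2⟩

theorem nonneg_iff (h : FloorCeilEq a b) : 0 ≤ a ↔ 0 ≤ b := by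
  rw [← Int.floor_nonneg, h.1, Int.floor_nonneg]

variable [IsOrderedRing α]

theorem add_intCast (h : FloorCeilEq a b) (m : ℤ) : FloorCeilEq (a + m) (b + m) := by
  simp only [FloorCeilEq, Int.floor_add_intCast, Int.ceil_add_intCast, h.1, h.2, and_self]

theorem eq_of_eq_intCast (h : FloorCeilEq a b) {m : ℤ} (ha : a = m) : a = b := by
  have hfloor : ⌊b⌋ = m := by rw [← h.1, ha, Int.floor_intCast]
  have hceil : ⌈b⌉ = m := by rw [← h.2, ha, Int.ceil_intCast]
  rw [ha]
  exact le_antisymm (hfloor ▸ Int.floor_le b) (hceil ▸ Int.le_ceil b)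

end Ring

section Field

variable {α : Type*} [Field α] [LinearOrder α] [IsStrictOrderedRing α] [FloorRing α] {a b : α}

theorem div_natCast (h : FloorCeilEq a b) (n : ℕ) : FloorCeilEq (a / n) (b / n) := by
  refine ⟨by rw [Int.floor_div_natCast, Int.floor_div_natCast, h.1], ?_⟩
  rw [← neg_neg ⌈a / n⌉, ← neg_neg ⌈b / n⌉, ← Int.floor_neg, ← Int.floor_neg, ← neg_div,
    ← neg_div, Int.floor_div_natCast, Int.floor_div_natCast, Int.floor_neg, Int.floor_neg, h.2]

theorem two_pow_mul_of_le {m n : ℕ} (h : FloorCeilEq (2 ^ n * a) (2 ^ n * b)) (hmn : m ≤ n) :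
    FloorCeilEq (2 ^ m * a) (2 ^ m * b) := by
  have hscale : ∀ t : α, 2 ^ m * t = 2 ^ n * t / ((2 ^ (n - m) : ℕ) : α) := fun t => by
    rw [eq_div_iff (by positivity), Nat.cast_pow, Nat.cast_ofNat, mul_right_comm, ← pow_add,
      Nat.add_sub_cancel' hmn]
  rw [hscale a, hscale b]
  exact h.div_natCast _

theorem half (h : FloorCeilEq a b) : FloorCeilEq (a / 2) (b / 2) := by
  exact_mod_cast h.div_natCast 2

theorem half_add_half (h : FloorCeilEq a b) : FloorCeilEq (a / 2 + 1 / 2) (b / 2 + 1 / 2) := by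
  rw [← add_div, ← add_div]
  exact_mod_cast (h.add_intCast 1).div_natCast 2

theorem half_sub_half (h : FloorCeilEq a b) : FloorCeilEq (a / 2 - 1 / 2) (b / 2 - 1 / 2) := by
  rw [← sub_div, ← sub_div, sub_eq_add_neg, sub_eq_add_neg]
  exact_mod_cast (h.add_intCast (-1)).div_natCast 2

theorem eq_of_fract_half_eq_half (h : FloorCeilEq a b) (ha : Int.fract (a / 2) = 1 / 2) : a = b :=
  h.eq_of_eq_intCast (m := 2 * ⌊a / 2⌋ + 1) <| by
    rw [Int.fract, sub_eq_iff_eq_add] at ha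
    push_cast
    linarith

theorem fract_half_eq_half_iff (h : FloorCeilEq a b) :
    Int.fract (a / 2) = 1 / 2 ↔ Int.fract (b / 2) = 1 / 2 :=
  ⟨fun ha => h.eq_of_fract_half_eq_half ha ▸ ha, fun hb => h.symm.eq_of_fract_half_eq_half hb ▸ hb⟩

end Field

end FloorCeilEq

theorem floorCeilEq_roundOdd (q : ℕ) (t : ℝ) :
    FloorCeilEq (2 ^ q * roundOdd (q + 1) t) (2 ^ q * t) := by
  unfold roundOdd
  split_ifs with hmult
  · exact .refl _
  rw [Nat.add_sub_cancel]
  set j := ⌊(2 : ℝ) ^ q * t⌋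
  have hmid : (2 : ℝ) ^ q * (((2 * j + 1 : ℤ) : ℝ) / 2 ^ (q + 1)) = j + 1 / 2 := by
    push_cast
    field_simp
    ring
  have hnotint : (2 : ℝ) ^ q * t ∉ Set.range Int.cast := by
    rintro ⟨m, hm⟩
    exact hmult ⟨2 * m, by push_cast; rw [pow_succ]; linarith⟩
  rw [hmid]
  constructor
  · rw [Int.floor_eq_iff]
    constructor <;> linarith
  · rw [(Int.ceil_eq_floor_add_one_iff_notMem _).2 hnotint, Int.ceil_eq_iff]
    push_cast
    constructor <;> linarith

section Rounding

variable {k : ℕ} {x v : ℝ}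

theorem two_pow_mul_eq_two_pow_succ_mul_div_two (k : ℕ) (t : ℝ) :
    (2 : ℝ) ^ k * t = 2 ^ (k + 1) * t / 2 := by
  ring

theorem nonneg_iff_of_floorCeilEq (h : FloorCeilEq (2 ^ (k + 1) * v) (2 ^ (k + 1) * x)) :
    0 ≤ v ↔ 0 ≤ x := by
  have hpos : (0 : ℝ) < 2 ^ (k + 1) := by positivity
  rw [← mul_nonneg_iff_of_pos_left hpos, h.nonneg_iff, mul_nonneg_iff_of_pos_left hpos]

theorem RD_eq_of_floorCeilEq (h : FloorCeilEq (2 ^ (k + 1) * v) (2 ^ (k + 1) * x)) :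
    RD k v = RD k x := by
  unfold RD
  rw [two_pow_mul_eq_two_pow_succ_mul_div_two k v, two_pow_mul_eq_two_pow_succ_mul_div_two k x,
    h.half.1]

theorem RU_eq_of_floorCeilEq (h : FloorCeilEq (2 ^ (k + 1) * v) (2 ^ (k + 1) * x)) :
    RU k v = RU k x := by
  unfold RU
  rw [two_pow_mul_eq_two_pow_succ_mul_div_two k v, two_pow_mul_eq_two_pow_succ_mul_div_two k x,
    h.half.2]

theorem RZ_eq_of_floorCeilEq (h : FloorCeilEq (2 ^ (k + 1) * v) (2 ^ (k + 1) * x)) :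
    RZ k v = RZ k x := by
  unfold RZ
  rw [two_pow_mul_eq_two_pow_succ_mul_div_two k v, two_pow_mul_eq_two_pow_succ_mul_div_two k x]
  simp only [nonneg_iff_of_floorCeilEq h, h.half.1, h.half.2]

theorem RA_eq_of_floorCeilEq (h : FloorCeilEq (2 ^ (k + 1) * v) (2 ^ (k + 1) * x)) :
    RA k v = RA k x := by
  unfold RA
  rw [two_pow_mul_eq_two_pow_succ_mul_div_two k v, two_pow_mul_eq_two_pow_succ_mul_div_two k x]
  simp only [nonneg_iff_of_floorCeilEq h, h.half_add_half.1, h.half_sub_half.2]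

theorem RN_eq_of_floorCeilEq (h : FloorCeilEq (2 ^ (k + 1) * v) (2 ^ (k + 1) * x)) :
    RN k v = RN k x := by
  unfold RN
  rw [two_pow_mul_eq_two_pow_succ_mul_div_two k v, two_pow_mul_eq_two_pow_succ_mul_div_two k x,
    round_eq, round_eq]
  simp only [h.fract_half_eq_half_iff, h.half.1, h.half_add_half.1]

end Rounding

theorem oddInterval_rounds_identically (p k : ℕ) (hkp : k + 2 ≤ p) (x v : ℝ)
    (hv : roundOdd p v = roundOdd p x) :
    RN k v = RN k x ∧ RA k v = RA k x ∧ RZ k v = RZ k x ∧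
      RU k v = RU k x ∧ RD k v = RD k x := by
  obtain ⟨q, rfl⟩ : ∃ q, p = q + 1 := ⟨p - 1, by omega⟩
  have hfine : FloorCeilEq (2 ^ q * v) (2 ^ q * x) :=
    (floorCeilEq_roundOdd q v).symm.trans (hv ▸ floorCeilEq_roundOdd q x)
  have h : FloorCeilEq (2 ^ (k + 1) * v) (2 ^ (k + 1) * x) := hfine.two_pow_mul_of_le (by omega)
  exact ⟨RN_eq_of_floorCeilEq h, RA_eq_of_floorCeilEq h, RZ_eq_of_floorCeilEq h,
    RU_eq_of_floorCeilEq h, RD_eq_of_floorCeilEq h⟩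
end

section
/- Let p : ℕ with 1 ≤ p and let x : ℝ with 0 ≤ x. Then 2^p * roundOdd p x is an integer, and ⌊2^p * roundOdd p x⌋ is odd if and only if 2^(p-1) * x is not an integer. (The last bit of the round-to-odd result at precision p equals the bitwise OR of all binary digits of x from position p onward.) -/
/-!
If `2^p x` is an integer `m`, rounding is exact and the last bit of `m` vanishes exactly when
`m / 2 = 2^(p-1) x` is an integer. Otherwise the numerator `2 ⌊2^(p-1) x⌋ + 1` is odd by
construction, and `2^(p-1) x` cannot be an integer since `2^p x` is not.
-/

theorem even_iff_exists_intCast_of_two_mul_eq {K : Type*} [Field K] [CharZero K] {y : K} {m : ℤ}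
    (h : 2 * y = m) : Even m ↔ ∃ n : ℤ, y = n := by
  constructor
  · rintro ⟨n, rfl⟩
    refine ⟨n, mul_left_cancel₀ two_ne_zero ?_⟩
    rw [h]
    push_cast
    ring
  · rintro ⟨n, rfl⟩
    exact ⟨n, by exact_mod_cast h.symm.trans (two_mul _)⟩

theorem two_pow_mul_eq_two_mul_two_pow_pred {p : ℕ} (hp : 1 ≤ p) (x : ℝ) :
    (2 : ℝ) ^ p * x = 2 * (2 ^ (p - 1) * x) := by
  rw [← mul_assoc, ← pow_succ', Nat.sub_add_cancel hp]

theorem roundOdd_of_exists {p : ℕ} {x : ℝ} (h : ∃ m : ℤ, (2 : ℝ) ^ p * x = m) :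
    roundOdd p x = x :=
  if_pos h

theorem two_pow_mul_roundOdd_of_not_exists {p : ℕ} {x : ℝ}
    (h : ¬ ∃ m : ℤ, (2 : ℝ) ^ p * x = m) :
    (2 : ℝ) ^ p * roundOdd p x = ((2 * ⌊(2 : ℝ) ^ (p - 1) * x⌋ + 1 : ℤ) : ℝ) := by
  rw [roundOdd, if_neg h, mul_div_cancel₀ _ (by positivity)]

theorem roundOdd_last_bit_general (p : ℕ) (hp : 1 ≤ p) (x : ℝ) :
    (∃ m : ℤ, (2 : ℝ) ^ p * roundOdd p x = (m : ℝ)) ∧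
      (Odd ⌊(2 : ℝ) ^ p * roundOdd p x⌋ ↔ ¬ ∃ m : ℤ, (2 : ℝ) ^ (p - 1) * x = (m : ℝ)) := by
  have hsplit := two_pow_mul_eq_two_mul_two_pow_pred hp x
  by_cases h : ∃ m : ℤ, (2 : ℝ) ^ p * x = m
  · obtain ⟨m, hm⟩ := h
    rw [roundOdd_of_exists ⟨m, hm⟩, hm, Int.floor_intCast, ← Int.not_even_iff_odd,
      even_iff_exists_intCast_of_two_mul_eq (hsplit ▸ hm)]
    exact ⟨⟨m, rfl⟩, Iff.rfl⟩
  · rw [two_pow_mul_roundOdd_of_not_exists h, Int.floor_intCast]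
    refine ⟨⟨_, rfl⟩, iff_of_true (odd_two_mul_add_one _) ?_⟩
    rintro ⟨n, hn⟩
    exact h ⟨2 * n, by rw [hsplit, hn]; push_cast; ring⟩

theorem roundOdd_last_bit (p : ℕ) (hp : 1 ≤ p) (x : ℝ) (hx : 0 ≤ x) :
    (∃ m : ℤ, (2 : ℝ) ^ p * roundOdd p x = (m : ℝ)) ∧
      (Odd ⌊(2 : ℝ) ^ p * roundOdd p x⌋ ↔ ¬ ∃ m : ℤ, (2 : ℝ) ^ (p - 1) * x = (m : ℝ)) :=
  roundOdd_last_bit_general p hp x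
end

section
/- Let k : ℕ and let x y : ℝ. Suppose x and y have the same sign (Real.sign x = Real.sign y), that ⌊2^(k+1) * |x|⌋ = ⌊2^(k+1) * |y|⌋, and that 2^(k+1) * |x| is an integer if and only if 2^(k+1) * |y| is an integer (i.e. x and y have identical rounding components at precision k: the same sign, truncated value, rounding bit, and sticky bit). Then x and y round identically to precision k under all five IEEE-754 rounding modes: RN k x = RN k y, RA k x = RA k y, RZ k x = RZ k y, RU k x = RU k y, and RD k x = RD k y. -/
/-!
Rounding `x` at precision `k` only inspects `c = 2^k x` through `⌊c⌋`, `⌈c⌉`, `⌊c + 1/2⌋`,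
`⌈c - 1/2⌉` and the tie test `fract c = 1/2`, i.e. whether `c - 1/2` is an integer. All of these are
functions of the cell of `2c` in the partition of the line into the integers and the open intervals
between them, and a cell is pinned down by its floor and ceiling. The hypotheses say that `2c` lies
in the same cell for `x` and for `y`: for `|x|` and `|y|` directly, and then for `x` and `y` because
they have the same sign and negation maps cells to cells.
-/

section SameCell

variable {α : Type*} [Field α] [LinearOrder α] [IsStrictOrderedRing α] [FloorRing α] {a b : α}

def SameCell (a b : α) : Prop := ⌊a⌋ = ⌊b⌋ ∧ ⌈a⌉ = ⌈b⌉

theorem exists_intCast_eq_iff_ceil_ne_floor_add_one (a : α) :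
    (∃ z : ℤ, a = z) ↔ ⌈a⌉ ≠ ⌊a⌋ + 1 := by
  rw [Ne, Int.ceil_eq_floor_add_one_iff_notMem, not_not, Set.mem_range]
  exact exists_congr fun _ => eq_comm

theorem sameCell_iff :
    SameCell a b ↔ ⌊a⌋ = ⌊b⌋ ∧ ((∃ z : ℤ, a = z) ↔ ∃ z : ℤ, b = z) := by
  simp only [exists_intCast_eq_iff_ceil_ne_floor_add_one]
  refine ⟨fun ⟨hfloor, hceil⟩ => ⟨hfloor, by rw [hfloor, hceil]⟩, fun ⟨hfloor, hint⟩ => ⟨hfloor, ?_⟩⟩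
  have := Int.floor_le_ceil a
  have := Int.floor_le_ceil b
  have := Int.ceil_le_floor_add_one a
  have := Int.ceil_le_floor_add_one b
  omega

theorem SameCell.neg (h : SameCell a b) : SameCell (-a) (-b) := by
  simp only [SameCell, Int.floor_neg, Int.ceil_neg, h.1, h.2, and_self]

theorem SameCell.add_intCast (h : SameCell a b) (n : ℤ) : SameCell (a + n) (b + n) := by
  simp only [SameCell, Int.floor_add_intCast, Int.ceil_add_intCast, h.1, h.2, and_self]

theorem floor_eq_of_floor_two_mul_eq (h : ⌊2 * a⌋ = ⌊2 * b⌋) : ⌊a⌋ = ⌊b⌋ := by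
  have floor_eq_half (c : α) : ⌊c⌋ = ⌊2 * c⌋ / 2 := by
    simpa using Int.floor_div_natCast (2 * c) 2
  rw [floor_eq_half a, floor_eq_half b, h]

theorem SameCell.of_two_mul (h : SameCell (2 * a) (2 * b)) : SameCell a b := by
  refine ⟨floor_eq_of_floor_two_mul_eq h.1, ?_⟩
  have hneg : ⌊-a⌋ = ⌊-b⌋ :=
    floor_eq_of_floor_two_mul_eq (by simpa only [mul_neg] using h.neg.1)
  simpa only [Int.floor_neg, neg_inj] using hneg

theorem SameCell.add_intCast_div_two (h : SameCell (2 * a) (2 * b)) (n : ℤ) :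
    SameCell (a + n / 2) (b + n / 2) := by
  refine SameCell.of_two_mul ?_
  rw [mul_add, mul_add, mul_div_cancel₀ _ two_ne_zero]
  exact h.add_intCast n

theorem SameCell.of_mul_abs {c : α} (h : SameCell (c * |a|) (c * |b|)) (hsign : 0 ≤ a ↔ 0 ≤ b) :
    SameCell (c * a) (c * b) := by
  rcases le_or_gt 0 a with ha | ha
  · rwa [abs_of_nonneg ha, abs_of_nonneg (hsign.1 ha)] at h
  · have hb : b < 0 := lt_of_not_ge (hsign.not.1 ha.not_ge)
    simpa only [abs_of_neg ha, abs_of_neg hb, mul_neg, neg_neg] using h.neg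

theorem Int.fract_eq_half_iff : Int.fract a = 1 / 2 ↔ ∃ z : ℤ, a - 1 / 2 = z := by
  rw [Int.fract_eq_iff, and_iff_right (by norm_num), and_iff_right (by norm_num)]

end SameCell

theorem Real.sign_nonneg_iff {r : ℝ} : 0 ≤ Real.sign r ↔ 0 ≤ r := by
  rcases lt_trichotomy r 0 with h | rfl | h
  · simp [Real.sign_of_neg h, h.not_ge]
  · simp [Real.sign_zero]
  · simp [Real.sign_of_pos h, h.le]

theorem same_rounding_components (k : ℕ) (x y : ℝ)
    (hsign : Real.sign x = Real.sign y)
    (hfloor : ⌊(2 : ℝ) ^ (k + 1) * |x|⌋ = ⌊(2 : ℝ) ^ (k + 1) * |y|⌋)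
    (hint : (∃ m : ℤ, (2 : ℝ) ^ (k + 1) * |x| = (m : ℝ)) ↔
      (∃ m : ℤ, (2 : ℝ) ^ (k + 1) * |y| = (m : ℝ))) :
    RN k x = RN k y ∧ RA k x = RA k y ∧ RZ k x = RZ k y ∧
      RU k x = RU k y ∧ RD k x = RD k y := by
  have hpos : 0 ≤ x ↔ 0 ≤ y := by rw [← Real.sign_nonneg_iff, hsign, Real.sign_nonneg_iff]
  have hcell : SameCell (2 * (2 ^ k * x)) (2 * (2 ^ k * y)) := by
    simpa only [pow_succ', mul_assoc] using (sameCell_iff.2 ⟨hfloor, hint⟩).of_mul_abs hpos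
  have h₀ : SameCell (2 ^ k * x) (2 ^ k * y) := hcell.of_two_mul
  have hup : SameCell (2 ^ k * x + 1 / 2) (2 ^ k * y + 1 / 2) := by
    simpa only [Int.cast_one] using hcell.add_intCast_div_two 1
  have hdown : SameCell (2 ^ k * x - 1 / 2) (2 ^ k * y - 1 / 2) := by
    simpa only [Int.cast_neg, Int.cast_one, neg_div, ← sub_eq_add_neg]
      using hcell.add_intCast_div_two (-1)
  have htie : Int.fract (2 ^ k * x) = 1 / 2 ↔ Int.fract (2 ^ k * y) = 1 / 2 := by
    simpa only [Int.fract_eq_half_iff] using (sameCell_iff.1 hdown).2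
  refine ⟨?_, ?_, ?_, ?_, ?_⟩
  · simp only [RN, round_eq, htie, h₀.1, hup.1]
  · simp only [RA, hpos, hup.1, hdown.2]
  · simp only [RZ, hpos, h₀.1, h₀.2]
  · simp only [RU, h₀.2]
  · simp only [RD, h₀.1]
end

section
/- Let p : ℕ with 1 ≤ p and let m : ℤ be even. For every real number x, roundOdd p x = m / 2^p if and only if x = m / 2^p. (The odd interval of an even precision-p value is a singleton: the only real that round-to-odd maps to an even value is that value itself.) -/
section RoundOdd

variable {p : ℕ} {x : ℝ}

theorem roundOdd_of_mul_eq_int (h : ∃ m : ℤ, (2 : ℝ) ^ p * x = m) : roundOdd p x = x :=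
  if_pos h

theorem exists_odd_roundOdd_eq_div (h : ¬∃ m : ℤ, (2 : ℝ) ^ p * x = m) :
    ∃ n : ℤ, Odd n ∧ roundOdd p x = n / 2 ^ p :=
  ⟨_, odd_two_mul_add_one _, if_neg h⟩

end RoundOdd

theorem int_div_two_pow_injective (p : ℕ) : Function.Injective fun n : ℤ => (n : ℝ) / 2 ^ p :=
  fun _ _ h => by exact_mod_cast (div_left_inj' (pow_ne_zero p two_ne_zero)).1 h

theorem roundOdd_eq_even_iff_general (p : ℕ) (m : ℤ) (hm : Even m) (x : ℝ) :
    roundOdd p x = (m : ℝ) / 2 ^ p ↔ x = (m : ℝ) / 2 ^ p := by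
  by_cases hx : ∃ n : ℤ, (2 : ℝ) ^ p * x = n
  · rw [roundOdd_of_mul_eq_int hx]
  obtain ⟨n, hn, hround⟩ := exists_odd_roundOdd_eq_div hx
  have hnm : n ≠ m := by
    rintro rfl
    exact Int.not_even_iff_odd.2 hn hm
  rw [hround]
  refine iff_of_false (fun h => hnm (int_div_two_pow_injective p h)) ?_
  rintro rfl
  exact hx ⟨m, mul_div_cancel₀ _ (pow_ne_zero p two_ne_zero)⟩

theorem roundOdd_eq_even_iff (p : ℕ) (hp : 1 ≤ p) (m : ℤ) (hm : Even m) (x : ℝ) :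
    roundOdd p x = (m : ℝ) / 2 ^ p ↔ x = (m : ℝ) / 2 ^ p :=
  roundOdd_eq_even_iff_general p m hm x
end
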